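/- arXiv:2105.09381 — 2 statements merged into one kernel-verified Lean document; each statement's English description precedes it below -/
import Mathlib

section
/- Let (Ω, ℱ, ℙ) be a probability space carrying random variables A₀, A₁, B₀, B₁, B₂, C₀, C₁, each taking values in {−1, +1} (this is exactly a local-hidden-variable / shared-randomness model of the tripartite experiment, where all response variables are jointly defined). Assume ℙ(C₁ = 1) > 0. Then I_Bell^{C₁=1} + 4·I_same ≤ 10, where I_Bell^{C₁=1} := E[A₀B₀ | C₁=1] + E[A₀B₁ | C₁=1] + E[A₁B₀ | C₁=1] − E[A₁B₁ | C₁=1] and I_same := E[A₀B₂] + E[B₂C₀]. -/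
/-!
Pointwise, `a₀(b₀ + b₁) + a₁(b₀ - b₁) ≤ |b₀ + b₁| + |b₀ - b₁| ≤ 2` for responses in `[-1, 1]`,
so the CHSH integrand integrates to at most `2 ℙ(C₁ = 1)` over `{C₁ = 1}` and the conditioned
CHSH value is at most `2`; each correlator in `I_same` is at most `1`. Hence the total is at
most `2 + 4 · 2 = 10`.
-/

open MeasureTheory

def chsh (a₀ a₁ b₀ b₁ : ℝ) : ℝ := a₀ * b₀ + a₀ * b₁ + a₁ * b₀ - a₁ * b₁

theorem chsh_le_two {a₀ a₁ b₀ b₁ : ℝ} (ha₀ : |a₀| ≤ 1) (ha₁ : |a₁| ≤ 1)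
    (hb₀ : |b₀| ≤ 1) (hb₁ : |b₁| ≤ 1) : chsh a₀ a₁ b₀ b₁ ≤ 2 := by
  have hsum : a₀ * (b₀ + b₁) ≤ |b₀ + b₁| := (le_abs_self _).trans <| by
    rw [abs_mul]; exact mul_le_of_le_one_left (abs_nonneg _) ha₀
  have hdiff : a₁ * (b₀ - b₁) ≤ |b₀ - b₁| := (le_abs_self _).trans <| by
    rw [abs_mul]; exact mul_le_of_le_one_left (abs_nonneg _) ha₁
  have hb : |b₀ + b₁| + |b₀ - b₁| ≤ 2 := by
    rw [abs_le] at hb₀ hb₁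
    cases abs_cases (b₀ + b₁) <;> cases abs_cases (b₀ - b₁) <;> linarith
  unfold chsh
  linarith

/-- Values in `[-1, 1]` rather than `{-1, 1}`: a local stochastic response enters through its
mean outcome. -/
structure IsResponse {Ω : Type*} [MeasurableSpace Ω] (f : Ω → ℝ) : Prop where
  measurable : Measurable f
  abs_le_one : ∀ ω, |f ω| ≤ 1

namespace IsResponse

variable {Ω : Type*} [MeasurableSpace Ω] {μ : Measure Ω} {f g : Ω → ℝ}

theorem of_eq_one_or_eq_neg_one (hf : Measurable f) (hf₁ : ∀ ω, f ω = 1 ∨ f ω = -1) :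
    IsResponse f :=
  ⟨hf, fun ω => by rcases hf₁ ω with h | h <;> simp [h]⟩

theorem abs_mul_le_one (hf : IsResponse f) (hg : IsResponse g) (ω : Ω) : |f ω * g ω| ≤ 1 := by
  rw [abs_mul]
  exact mul_le_one₀ (hf.abs_le_one ω) (abs_nonneg _) (hg.abs_le_one ω)

theorem integrable_mul [IsFiniteMeasure μ] (hf : IsResponse f) (hg : IsResponse g) :
    Integrable (fun ω => f ω * g ω) μ :=
  .of_bound (hf.measurable.mul hg.measurable).aestronglyMeasurable 1 <|
    .of_forall (hf.abs_mul_le_one hg)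

theorem integral_mul_le_one [IsProbabilityMeasure μ] (hf : IsResponse f) (hg : IsResponse g) :
    ∫ ω, f ω * g ω ∂μ ≤ 1 := calc
  ∫ ω, f ω * g ω ∂μ ≤ ∫ _, (1 : ℝ) ∂μ :=
    integral_mono (hf.integrable_mul hg) (integrable_const 1) fun ω =>
      (le_abs_self _).trans (hf.abs_mul_le_one hg ω)
  _ = 1 := by simp

end IsResponse

section CHSH

variable {Ω : Type*} [MeasurableSpace Ω] {μ : Measure Ω} [IsFiniteMeasure μ]
  {A₀ A₁ B₀ B₁ : Ω → ℝ}

theorem integrable_chsh (hA₀ : IsResponse A₀) (hA₁ : IsResponse A₁) (hB₀ : IsResponse B₀)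
    (hB₁ : IsResponse B₁) : Integrable (fun ω => chsh (A₀ ω) (A₁ ω) (B₀ ω) (B₁ ω)) μ :=
  (((hA₀.integrable_mul hB₀).add (hA₀.integrable_mul hB₁)).add
    (hA₁.integrable_mul hB₀)).sub (hA₁.integrable_mul hB₁)

theorem integral_chsh (hA₀ : IsResponse A₀) (hA₁ : IsResponse A₁) (hB₀ : IsResponse B₀)
    (hB₁ : IsResponse B₁) :
    ∫ ω, chsh (A₀ ω) (A₁ ω) (B₀ ω) (B₁ ω) ∂μ =
      (∫ ω, A₀ ω * B₀ ω ∂μ) + (∫ ω, A₀ ω * B₁ ω ∂μ) + (∫ ω, A₁ ω * B₀ ω ∂μ) -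
        ∫ ω, A₁ ω * B₁ ω ∂μ := by
  have h₀₀ := hA₀.integrable_mul hB₀ (μ := μ)
  have h₀₁ := hA₀.integrable_mul hB₁ (μ := μ)
  have h₁₀ := hA₁.integrable_mul hB₀ (μ := μ)
  have h₁₁ := hA₁.integrable_mul hB₁ (μ := μ)
  have h₀ : Integrable (fun ω => A₀ ω * B₀ ω + A₀ ω * B₁ ω) μ := h₀₀.add h₀₁
  have h₀₁₀ : Integrable (fun ω => A₀ ω * B₀ ω + A₀ ω * B₁ ω + A₁ ω * B₀ ω) μ := h₀.add h₁₀
  simp only [chsh]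
  rw [integral_sub h₀₁₀ h₁₁, integral_add h₀ h₁₀, integral_add h₀₀ h₀₁]

theorem inv_measureReal_univ_mul_integral_chsh_le_two (hA₀ : IsResponse A₀)
    (hA₁ : IsResponse A₁) (hB₀ : IsResponse B₀) (hB₁ : IsResponse B₁) :
    (μ.real Set.univ)⁻¹ * ∫ ω, chsh (A₀ ω) (A₁ ω) (B₀ ω) (B₁ ω) ∂μ ≤ 2 := by
  refine inv_mul_le_of_le_mul₀ measureReal_nonneg zero_le_two ?_
  calc ∫ ω, chsh (A₀ ω) (A₁ ω) (B₀ ω) (B₁ ω) ∂μ ≤ ∫ _, (2 : ℝ) ∂μ :=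
        integral_mono (integrable_chsh hA₀ hA₁ hB₀ hB₁) (integrable_const 2) fun ω =>
          chsh_le_two (hA₀.abs_le_one ω) (hA₁.abs_le_one ω) (hB₀.abs_le_one ω)
            (hB₁.abs_le_one ω)
    _ = μ.real Set.univ * 2 := by rw [integral_const, smul_eq_mul]

end CHSH

theorem lhv_conditioned_chsh_plus_same_le_ten_general
    {Ω : Type*} [MeasurableSpace Ω] (μ : Measure Ω) [IsProbabilityMeasure μ]
    (A₀ A₁ B₀ B₁ B₂ C₀ C₁ : Ω → ℝ)
    (hA₀ : Measurable A₀) (hA₁ : Measurable A₁)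
    (hB₀ : Measurable B₀) (hB₁ : Measurable B₁) (hB₂ : Measurable B₂)
    (hC₀ : Measurable C₀)
    (hvA₀ : ∀ ω, A₀ ω = 1 ∨ A₀ ω = -1) (hvA₁ : ∀ ω, A₁ ω = 1 ∨ A₁ ω = -1)
    (hvB₀ : ∀ ω, B₀ ω = 1 ∨ B₀ ω = -1) (hvB₁ : ∀ ω, B₁ ω = 1 ∨ B₁ ω = -1)
    (hvB₂ : ∀ ω, B₂ ω = 1 ∨ B₂ ω = -1)
    (hvC₀ : ∀ ω, C₀ ω = 1 ∨ C₀ ω = -1) :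
    (μ (C₁ ⁻¹' {1})).toReal⁻¹ *
        ((∫ ω in C₁ ⁻¹' {1}, A₀ ω * B₀ ω ∂μ) +
         (∫ ω in C₁ ⁻¹' {1}, A₀ ω * B₁ ω ∂μ) +
         (∫ ω in C₁ ⁻¹' {1}, A₁ ω * B₀ ω ∂μ) -
         (∫ ω in C₁ ⁻¹' {1}, A₁ ω * B₁ ω ∂μ)) +
      4 * ((∫ ω, A₀ ω * B₂ ω ∂μ) + (∫ ω, B₂ ω * C₀ ω ∂μ)) ≤ 10 := by
  have rA₀ := IsResponse.of_eq_one_or_eq_neg_one hA₀ hvA₀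
  have rA₁ := IsResponse.of_eq_one_or_eq_neg_one hA₁ hvA₁
  have rB₀ := IsResponse.of_eq_one_or_eq_neg_one hB₀ hvB₀
  have rB₁ := IsResponse.of_eq_one_or_eq_neg_one hB₁ hvB₁
  have rB₂ := IsResponse.of_eq_one_or_eq_neg_one hB₂ hvB₂
  have rC₀ := IsResponse.of_eq_one_or_eq_neg_one hC₀ hvC₀
  have hBell := inv_measureReal_univ_mul_integral_chsh_le_two (μ := μ.restrict (C₁ ⁻¹' {1}))
    rA₀ rA₁ rB₀ rB₁
  rw [integral_chsh rA₀ rA₁ rB₀ rB₁, measureReal_restrict_apply_univ, measureReal_def] at hBell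
  have hAB := rA₀.integral_mul_le_one rB₂ (μ := μ)
  have hBC := rB₂.integral_mul_le_one rC₀ (μ := μ)
  linarith

/-- In any local-hidden-variable / shared-randomness model of the
tripartite experiment (all seven ±1-valued response variables defined on one
probability space), if ℙ(C₁ = 1) > 0 then
`I_Bell^{C₁=1} + 4·I_same ≤ 10`, where
`I_Bell^{C₁=1} = E[A₀B₀|C₁=1] + E[A₀B₁|C₁=1] + E[A₁B₀|C₁=1] − E[A₁B₁|C₁=1]` and
`I_same = E[A₀B₂] + E[B₂C₀]`. -/
theorem lhv_conditioned_chsh_plus_same_le_ten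
    {Ω : Type*} [MeasurableSpace Ω] (μ : Measure Ω) [IsProbabilityMeasure μ]
    (A₀ A₁ B₀ B₁ B₂ C₀ C₁ : Ω → ℝ)
    (hA₀ : Measurable A₀) (hA₁ : Measurable A₁)
    (hB₀ : Measurable B₀) (hB₁ : Measurable B₁) (hB₂ : Measurable B₂)
    (hC₀ : Measurable C₀) (hC₁ : Measurable C₁)
    (hvA₀ : ∀ ω, A₀ ω = 1 ∨ A₀ ω = -1) (hvA₁ : ∀ ω, A₁ ω = 1 ∨ A₁ ω = -1)
    (hvB₀ : ∀ ω, B₀ ω = 1 ∨ B₀ ω = -1) (hvB₁ : ∀ ω, B₁ ω = 1 ∨ B₁ ω = -1)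
    (hvB₂ : ∀ ω, B₂ ω = 1 ∨ B₂ ω = -1)
    (hvC₀ : ∀ ω, C₀ ω = 1 ∨ C₀ ω = -1) (hvC₁ : ∀ ω, C₁ ω = 1 ∨ C₁ ω = -1)
    (hpos : 0 < μ (C₁ ⁻¹' {1})) :
    (μ (C₁ ⁻¹' {1})).toReal⁻¹ *
        ((∫ ω in C₁ ⁻¹' {1}, A₀ ω * B₀ ω ∂μ) +
         (∫ ω in C₁ ⁻¹' {1}, A₀ ω * B₁ ω ∂μ) +
         (∫ ω in C₁ ⁻¹' {1}, A₁ ω * B₀ ω ∂μ) -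
         (∫ ω in C₁ ⁻¹' {1}, A₁ ω * B₁ ω ∂μ)) +
      4 * ((∫ ω, A₀ ω * B₂ ω ∂μ) + (∫ ω, B₂ ω * C₀ ω ∂μ)) ≤ 10 :=
  lhv_conditioned_chsh_plus_same_le_ten_general μ A₀ A₁ B₀ B₁ B₂ C₀ C₁ hA₀ hA₁ hB₀ hB₁ hB₂ hC₀ hvA₀
    hvA₁ hvB₀ hvB₁ hvB₂ hvC₀
end

section
/- Let |GHZ⟩ = (|000⟩ + |111⟩)/√2 ∈ ℂ² ⊗ ℂ² ⊗ ℂ², let Z and X be the Pauli matrices, and let Π₊ = (I + X)/2 be the projector onto |+⟩ on Charlie's qubit. Define the strategy A₀ = Z, A₁ = X (Alice), B₀ = (Z+X)/√2, B₁ = (Z−X)/√2, B₂ = Z (Bob), C₀ = Z (Charlie's first input), and let Charlie's second input be a Hadamard-basis measurement with outcome C₁ = 1 corresponding to Π₊. Then: (i) ⟨GHZ| I⊗I⊗X |GHZ⟩ = 0, i.e. ⟨C₁⟩ = 0; (ii) ⟨GHZ| A₀⊗B₂⊗I |GHZ⟩ = 1 and ⟨GHZ| I⊗B₂⊗C₀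 |GHZ⟩ = 1, so I_same = 2; (iii) the conditional CHSH value I_Bell^{C₁=1} := (Σ_{(x,y)≠(1,1)} ⟨GHZ| A_x⊗B_y⊗Π₊ |GHZ⟩ − ⟨GHZ| A₁⊗B₁⊗Π₊ |GHZ⟩) / ⟨GHZ| I⊗I⊗Π₊ |GHZ⟩ equals 2√2. Consequently I_Bell^{C₁=1} + 4·I_same = 2√2 + 8 > 10. -/
open Matrix
open scoped Kronecker BigOperators

/-- The Pauli matrix `Z = [[1,0],[0,−1]]`. -/
noncomputable def pauliZ : Matrix (Fin 2) (Fin 2) ℂ := !![1, 0; 0, -1]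

/-- The Pauli matrix `X = [[0,1],[1,0]]`. -/
noncomputable def pauliX : Matrix (Fin 2) (Fin 2) ℂ := !![0, 1; 1, 0]

/-- Bob's observable `B₀ = (Z+X)/√2`. -/
noncomputable def bobB₀ : Matrix (Fin 2) (Fin 2) ℂ :=
  (Real.sqrt 2 : ℂ)⁻¹ • (pauliZ + pauliX)

/-- Bob's observable `B₁ = (Z−X)/√2`. -/
noncomputable def bobB₁ : Matrix (Fin 2) (Fin 2) ℂ :=
  (Real.sqrt 2 : ℂ)⁻¹ • (pauliZ - pauliX)

/-- The projector `Π₊ = (I + X)/2` onto `|+⟩`. -/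
noncomputable def projPlus : Matrix (Fin 2) (Fin 2) ℂ :=
  (2 : ℂ)⁻¹ • ((1 : Matrix (Fin 2) (Fin 2) ℂ) + pauliX)

/-- The GHZ state `(|000⟩ + |111⟩)/√2` as a vector in ℂ²⊗ℂ²⊗ℂ². -/
noncomputable def ketGHZ : Fin 2 × Fin 2 × Fin 2 → ℂ :=
  fun t => if t.1 = t.2.1 ∧ t.2.1 = t.2.2 then (Real.sqrt 2 : ℂ)⁻¹ else 0

/-- The expectation value `⟨GHZ| M |GHZ⟩` of a three-qubit operator `M`. -/
noncomputable def ghzExp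
    (M : Matrix (Fin 2 × Fin 2 × Fin 2) (Fin 2 × Fin 2 × Fin 2) ℂ) : ℂ :=
  star ketGHZ ⬝ᵥ M.mulVec ketGHZ

/-!
On the GHZ state a product observable has expectation `⟨A ⊗ B ⊗ C⟩ = ½ ∑ᵢⱼ Aᵢⱼ Bᵢⱼ Cᵢⱼ`.
Every entry of `Π₊` is `½`, so `⟨A ⊗ B ⊗ Π₊⟩ = ¼ ∑ᵢⱼ Aᵢⱼ Bᵢⱼ` and `⟨I ⊗ I ⊗ Π₊⟩ = ½`: the
outcome `C₁ = 1` leaves Alice and Bob in `|Φ⁺⟩`, where the conditional correlators are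
`½ ∑ᵢⱼ Aᵢⱼ Bᵢⱼ` and the measurements `Z, X` against `(Z ± X)/√2` reach Tsirelson's bound `2√2`.
-/

lemma ofReal_sqrt_two_sq : ((Real.sqrt 2 : ℝ) : ℂ) ^ 2 = 2 := by
  rw [← Complex.ofReal_pow, Real.sq_sqrt zero_le_two]; norm_num

lemma ofReal_sqrt_two_inv_mul_self :
    ((Real.sqrt 2 : ℝ) : ℂ)⁻¹ * ((Real.sqrt 2 : ℝ) : ℂ)⁻¹ = 1 / 2 := by
  rw [← mul_inv, ← sq, ofReal_sqrt_two_sq, one_div]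

lemma ofReal_sqrt_two_inv_add_self :
    ((Real.sqrt 2 : ℝ) : ℂ)⁻¹ + ((Real.sqrt 2 : ℝ) : ℂ)⁻¹ = Real.sqrt 2 := by
  have h : ((Real.sqrt 2 : ℝ) : ℂ) ≠ 0 := by exact_mod_cast (Real.sqrt_pos.2 zero_lt_two).ne'
  field_simp
  rw [ofReal_sqrt_two_sq]; ring

lemma ghzExp_kronecker (A B C : Matrix (Fin 2) (Fin 2) ℂ) :
    ghzExp (A ⊗ₖ (B ⊗ₖ C)) = (∑ i, ∑ j, A i j * B i j * C i j) / 2 := by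
  simp only [ghzExp, ketGHZ, dotProduct, mulVec, Fintype.sum_prod_type, Fin.sum_univ_two,
    kroneckerMap_apply, Pi.star_apply]
  norm_num
  linear_combination (A 0 0 * B 0 0 * C 0 0 + A 0 1 * B 0 1 * C 0 1 + A 1 0 * B 1 0 * C 1 0
    + A 1 1 * B 1 1 * C 1 1) * ofReal_sqrt_two_inv_mul_self

lemma projPlus_apply (i j : Fin 2) : projPlus i j = 1 / 2 := by
  fin_cases i <;> fin_cases j <;> simp [projPlus, pauliX]

lemma ghzExp_kronecker_projPlus (A B : Matrix (Fin 2) (Fin 2) ℂ) :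
    ghzExp (A ⊗ₖ (B ⊗ₖ projPlus)) = (∑ i, ∑ j, A i j * B i j) / 4 := by
  simp only [ghzExp_kronecker, projPlus_apply, Finset.sum_div]
  ring_nf

lemma ghzExp_one_one_pauliX :
    ghzExp ((1 : Matrix (Fin 2) (Fin 2) ℂ) ⊗ₖ ((1 : Matrix (Fin 2) (Fin 2) ℂ) ⊗ₖ pauliX)) = 0 := by
  simp [ghzExp_kronecker, Fin.sum_univ_two, pauliX]

lemma ghzExp_pauliZ_pauliZ_one :
    ghzExp (pauliZ ⊗ₖ (pauliZ ⊗ₖ (1 : Matrix (Fin 2) (Fin 2) ℂ))) = 1 := by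
  simp [ghzExp_kronecker, Fin.sum_univ_two, pauliZ]

lemma ghzExp_one_pauliZ_pauliZ :
    ghzExp ((1 : Matrix (Fin 2) (Fin 2) ℂ) ⊗ₖ (pauliZ ⊗ₖ pauliZ)) = 1 := by
  simp [ghzExp_kronecker, Fin.sum_univ_two, pauliZ]

lemma ghzExp_one_one_projPlus :
    ghzExp ((1 : Matrix (Fin 2) (Fin 2) ℂ) ⊗ₖ ((1 : Matrix (Fin 2) (Fin 2) ℂ) ⊗ₖ projPlus))
      = 1 / 2 := by
  rw [ghzExp_kronecker_projPlus]; norm_num [Fin.sum_univ_two]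

lemma ghzExp_pauliZ_bobB₀_projPlus :
    ghzExp (pauliZ ⊗ₖ (bobB₀ ⊗ₖ projPlus)) = Real.sqrt 2 / 4 := by
  rw [ghzExp_kronecker_projPlus, ← ofReal_sqrt_two_inv_add_self]
  simp [Fin.sum_univ_two, pauliZ, pauliX, bobB₀]

lemma ghzExp_pauliZ_bobB₁_projPlus :
    ghzExp (pauliZ ⊗ₖ (bobB₁ ⊗ₖ projPlus)) = Real.sqrt 2 / 4 := by
  rw [ghzExp_kronecker_projPlus, ← ofReal_sqrt_two_inv_add_self]
  simp [Fin.sum_univ_two, pauliZ, pauliX, bobB₁]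

lemma ghzExp_pauliX_bobB₀_projPlus :
    ghzExp (pauliX ⊗ₖ (bobB₀ ⊗ₖ projPlus)) = Real.sqrt 2 / 4 := by
  rw [ghzExp_kronecker_projPlus, ← ofReal_sqrt_two_inv_add_self]
  simp [Fin.sum_univ_two, pauliZ, pauliX, bobB₀]

lemma ghzExp_pauliX_bobB₁_projPlus :
    ghzExp (pauliX ⊗ₖ (bobB₁ ⊗ₖ projPlus)) = -Real.sqrt 2 / 4 := by
  rw [ghzExp_kronecker_projPlus, ← ofReal_sqrt_two_inv_add_self]
  simp [Fin.sum_univ_two, pauliZ, pauliX, bobB₁]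

/-- For the strategy `A₀ = Z, A₁ = X, B₀ = (Z+X)/√2,
`B₁ = (Z−X)/√2, B₂ = Z, C₀ = Z` and Charlie's outcome `C₁ = 1` given by `Π₊`,
on the GHZ state: (i) `⟨C₁⟩ = ⟨I⊗I⊗X⟩ = 0`; (ii) `⟨A₀⊗B₂⊗I⟩ = ⟨I⊗B₂⊗C₀⟩ = 1`,
so `I_same = 2`; (iii) the conditional CHSH value `I_Bell^{C₁=1} = 2√2`;
consequently `I_Bell^{C₁=1} + 4·I_same = 2√2 + 8 > 10`. -/
theorem ghz_strategy_violation :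
    ghzExp ((1 : Matrix (Fin 2) (Fin 2) ℂ) ⊗ₖ ((1 : Matrix (Fin 2) (Fin 2) ℂ) ⊗ₖ pauliX)) = 0 ∧
    ghzExp (pauliZ ⊗ₖ (pauliZ ⊗ₖ (1 : Matrix (Fin 2) (Fin 2) ℂ))) = 1 ∧
    ghzExp ((1 : Matrix (Fin 2) (Fin 2) ℂ) ⊗ₖ (pauliZ ⊗ₖ pauliZ)) = 1 ∧
    (ghzExp (pauliZ ⊗ₖ (bobB₀ ⊗ₖ projPlus)) +
     ghzExp (pauliZ ⊗ₖ (bobB₁ ⊗ₖ projPlus)) +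
     ghzExp (pauliX ⊗ₖ (bobB₀ ⊗ₖ projPlus)) -
     ghzExp (pauliX ⊗ₖ (bobB₁ ⊗ₖ projPlus))) /
        ghzExp ((1 : Matrix (Fin 2) (Fin 2) ℂ) ⊗ₖ ((1 : Matrix (Fin 2) (Fin 2) ℂ) ⊗ₖ projPlus))
      = 2 * (Real.sqrt 2 : ℂ) ∧
    (ghzExp (pauliZ ⊗ₖ (bobB₀ ⊗ₖ projPlus)) +
     ghzExp (pauliZ ⊗ₖ (bobB₁ ⊗ₖ projPlus)) +
     ghzExp (pauliX ⊗ₖ (bobB₀ ⊗ₖ projPlus)) -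
     ghzExp (pauliX ⊗ₖ (bobB₁ ⊗ₖ projPlus))) /
        ghzExp ((1 : Matrix (Fin 2) (Fin 2) ℂ) ⊗ₖ ((1 : Matrix (Fin 2) (Fin 2) ℂ) ⊗ₖ projPlus))
      + 4 * (ghzExp (pauliZ ⊗ₖ (pauliZ ⊗ₖ (1 : Matrix (Fin 2) (Fin 2) ℂ))) +
             ghzExp ((1 : Matrix (Fin 2) (Fin 2) ℂ) ⊗ₖ (pauliZ ⊗ₖ pauliZ)))
      = ((2 * Real.sqrt 2 + 8 : ℝ) : ℂ) ∧
    (10 : ℝ) < 2 * Real.sqrt 2 + 8 := by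
  simp only [ghzExp_one_one_pauliX, ghzExp_pauliZ_pauliZ_one, ghzExp_one_pauliZ_pauliZ,
    ghzExp_one_one_projPlus, ghzExp_pauliZ_bobB₀_projPlus, ghzExp_pauliZ_bobB₁_projPlus,
    ghzExp_pauliX_bobB₀_projPlus, ghzExp_pauliX_bobB₁_projPlus]
  refine ⟨trivial, trivial, trivial, by ring, by push_cast; ring, ?_⟩
  linarith [Real.one_lt_sqrt_two]
end
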